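/- The set {X ∈ 𝒢 : X V = V X for all V ∈ 𝒢^{(0)}} is equal to Λ_r + 𝒢^n (the sum of the subspaces Λ_r and 𝒢^n). -/

import Mathlib

/-!
The products `e_A = e_{a₁} ⋯ e_{a_k}`, `a₁ < ⋯ < a_k`, form a basis of `𝒢`: it is the exterior
algebra basis pulled back along Chevalley's linear isomorphism `𝒢 ≅ Λ 𝔽ⁿ`, which fixes products of
pairwise orthogonal vectors. One has `e_c e_A = ± e_A e_c` with sign `(-1)^(|A| + [c ∈ A])`, and
`e_A e_c` is a multiple of `e_{A ∆ {c}}`, nonzero unless `c ∈ A` is null.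

If `X` commutes with `e_a e_d`, where `e_a² ≠ 0`, then for `a ∈ A`, `d ∉ A` the coefficients of
`e_{A ∆ {a, d}}` in `X e_a e_d` and in `e_a e_d X` are `t x_A` and `-t x_A` with `t ≠ 0`, so
`x_A = 0`. Thus a blade `e_A` occurring in an element commuting with `𝒢^{(0)}` either consists of
null generators or is `e_{1…n}`. Conversely a null generator anticommutes with every generator,
and `e_{1…n}` commutes or anticommutes with all of them according to the parity of `n`; either
way both commute with the even subalgebra.
-/


open Pointwise

noncomputable section

namespace ClGA

variable (𝔽 : Type*) [RCLike 𝔽] (p q r : ℕ)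

/-- The diagonal weights: `p` ones, `q` minus-ones, `r` zeros. -/
def w : Fin (p + q + r) → 𝔽 := fun i =>
  if (i : ℕ) < p then 1 else if (i : ℕ) < p + q then -1 else 0

/-- The quadratic form on `𝔽^n` whose Gram matrix is `diag(1,…,1,−1,…,−1,0,…,0)`. -/
def Q : QuadraticForm 𝔽 (Fin (p + q + r) → 𝔽) :=
  QuadraticMap.weightedSumSquares 𝔽 (w 𝔽 p q r)

/-- The degenerate Clifford geometric algebra `𝒢 = 𝒢_{p,q,r}`. -/
abbrev G := CliffordAlgebra (Q 𝔽 p q r)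

/-- The generators `e_a`, `a = 1, …, n`. -/
def e (a : Fin (p + q + r)) : G 𝔽 p q r :=
  CliffordAlgebra.ι (Q 𝔽 p q r) (Pi.single a 1)

/-- The even subspace `𝒢^{(0)}`: the `+1`-eigenspace of the grade involution. -/
def Geven : Submodule 𝔽 (G 𝔽 p q r) where
  carrier := {x | CliffordAlgebra.involute x = x}
  add_mem' := by
    intro a b ha hb
    simp only [Set.mem_setOf_eq, map_add] at ha hb ⊢
    rw [ha, hb]
  zero_mem' := by simp
  smul_mem' := by
    intro c x hx
    simp only [Set.mem_setOf_eq, map_smul] at hx ⊢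
    rw [hx]

/-- The odd subspace `𝒢^{(1)}`: the `−1`-eigenspace of the grade involution. -/
def Godd : Submodule 𝔽 (G 𝔽 p q r) where
  carrier := {x | CliffordAlgebra.involute x = -x}
  add_mem' := by
    intro a b ha hb
    simp only [Set.mem_setOf_eq, map_add] at ha hb ⊢
    rw [ha, hb, neg_add]
  zero_mem' := by simp
  smul_mem' := by
    intro c x hx
    simp only [Set.mem_setOf_eq, map_smul] at hx ⊢
    rw [hx, smul_neg]

/-- The grade-1 subspace `𝒢^1`, the span of the generators. -/
def G1 : Submodule 𝔽 (G 𝔽 p q r) := Submodule.span 𝔽 (Set.range (e 𝔽 p q r))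

/-- The scalar (grade-0) subspace `𝒢^0 = 𝔽·1`. -/
def G0 : Submodule 𝔽 (G 𝔽 p q r) := Submodule.span 𝔽 {(1 : G 𝔽 p q r)}

/-- The element `e_{1…n} = e_1 e_2 ⋯ e_n`. -/
def eTop : G 𝔽 p q r := (List.ofFn (e 𝔽 p q r)).prod

/-- The grade-`n` subspace `𝒢^n = 𝔽·e_{1…n}`. -/
def Gn : Submodule 𝔽 (G 𝔽 p q r) := Submodule.span 𝔽 {eTop 𝔽 p q r}

/-- The Grassmann subalgebra `Λ_r` generated by the null generators. -/
def Λr : Subalgebra 𝔽 (G 𝔽 p q r) :=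
  Algebra.adjoin 𝔽 {x | ∃ a : Fin (p + q + r), p + q ≤ (a : ℕ) ∧ x = e 𝔽 p q r a}

/-- `Λ_r` viewed as a subspace of `𝒢`. -/
def Λrs : Submodule 𝔽 (G 𝔽 p q r) := Subalgebra.toSubmodule (Λr 𝔽 p q r)

/-- The even part `Λ_r^{(0)} = Λ_r ∩ 𝒢^{(0)}`. -/
def Λr0 : Submodule 𝔽 (G 𝔽 p q r) := Λrs 𝔽 p q r ⊓ Geven 𝔽 p q r

/-- The Jacobson radical `rad 𝒢` of `𝒢`: the two-sided ideal generated by the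
null generators. -/
def radG : Submodule 𝔽 (G 𝔽 p q r) :=
  Submodule.span 𝔽 {x | ∃ (u v : G 𝔽 p q r) (a : Fin (p + q + r)),
    p + q ≤ (a : ℕ) ∧ x = u * e 𝔽 p q r a * v}

/-- `rad 𝒢^{(0)} = rad 𝒢 ∩ 𝒢^{(0)}`. -/
def radG0 : Submodule 𝔽 (G 𝔽 p q r) := radG 𝔽 p q r ⊓ Geven 𝔽 p q r

/-- For a subset `S ⊆ 𝒢`, `S^×` denotes those elements of `S` invertible in `𝒢`. -/
def ux (S : Set (G 𝔽 p q r)) : Set (G 𝔽 p q r) := {x ∈ S | IsUnit x}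

/-- `𝒢^{(0)×} ∪ 𝒢^{(1)×}` (the group `P^±_{p,q,r}`). -/
def Epm : Set (G 𝔽 p q r) :=
  ux 𝔽 p q r ↑(Geven 𝔽 p q r) ∪ ux 𝔽 p q r ↑(Godd 𝔽 p q r)

/-- `(T⁻¹)^̂ · T`, the grade involution of the inverse times `T`. -/
def tw (T : G 𝔽 p q r) : G 𝔽 p q r :=
  CliffordAlgebra.involute (Ring.inverse T) * T

/-- The invertible elements `T` with `T W T⁻¹ ⊆ W` (adjoint representation). -/
def gammaAd (W : Submodule 𝔽 (G 𝔽 p q r)) : Set (G 𝔽 p q r) :=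
  {T | IsUnit T ∧ ∀ U ∈ W, T * U * Ring.inverse T ∈ W}

/-- The invertible elements `T` with `T̂ W T⁻¹ ⊆ W` (twisted adjoint representation). -/
def gammaTw (W : Submodule 𝔽 (G 𝔽 p q r)) : Set (G 𝔽 p q r) :=
  {T | IsUnit T ∧ ∀ U ∈ W, CliffordAlgebra.involute T * U * Ring.inverse T ∈ W}

end ClGA

namespace CliffordAlgebra

variable {R M : Type*} [CommRing R] [AddCommGroup M] [Module R M] {Q Q' : QuadraticForm R M}

theorem contractLeft_prod_map_ι {d : Module.Dual R M} {l : List M} (h : ∀ m ∈ l, d m = 0) :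
    contractLeft d (l.map (ι Q)).prod = 0 := by
  induction l with
  | nil => simp
  | cons m l ih =>
    rw [List.map_cons, List.prod_cons, contractLeft_ι_mul, h m (by simp),
      ih fun m' hm' => h m' (by simp [hm']), zero_smul, mul_zero, sub_zero]

theorem changeForm_prod_map_ι {B : LinearMap.BilinForm R M} (h : B.toQuadraticMap = Q' - Q)
    {l : List M} (hl : l.Pairwise fun a b => B a b = 0) :
    changeForm h (l.map (ι Q)).prod = (l.map (ι Q')).prod := by
  induction l with
  | nil => simp
  | cons m l ih =>
    rw [List.pairwise_cons] at hl
    rw [List.map_cons, List.prod_cons, changeForm_ι_mul, ih hl.2, contractLeft_prod_map_ι hl.1,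
      sub_zero, List.map_cons, List.prod_cons]

theorem equivExterior_prod_map_ι [Invertible (2 : R)] {l : List M} (hl : l.Pairwise Q.IsOrtho) :
    equivExterior Q (l.map (ι Q)).prod = (l.map (ExteriorAlgebra.ι R)).prod :=
  changeForm_prod_map_ι changeForm.associated_neg_proof <| hl.imp fun h => by
    rw [QuadraticMap.associated_apply]
    simp [QuadraticMap.isOrtho_def.1 h]

end CliffordAlgebra

theorem ExteriorAlgebra.basis_apply_eq_prod_map_sort {R M I : Type*} [CommRing R]
    [AddCommGroup M] [Module R M] [LinearOrder I] (b : Module.Basis I R M) (A : Finset I) :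
    b.ExteriorAlgebra A = (A.sort.map fun i => ι R (b i)).prod := by
  rw [basis_apply_ofCard b rfl, ιMulti_family, ιMulti_apply, List.ofFn_eq_map,
    ← A.listMap_orderEmbOfFin_finRange rfl, List.map_map]
  rfl

theorem Module.Basis.repr_apply_of_apply_eq_smul {ι R M : Type*} [CommSemiring R]
    [AddCommMonoid M] [Module R M] (b : Basis ι R M) (L : M →ₗ[R] M) {τ : ι → ι}
    (hτ : Function.Injective τ) (t : ι → R) (h : ∀ i, L (b i) = t i • b (τ i)) (x : M) (i : ι) :
    b.repr (L x) (τ i) = t i * b.repr x i := by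
  classical
  have : Finsupp.lapply (τ i) ∘ₗ b.repr.toLinearMap ∘ₗ L = t i • b.coord i := by
    refine b.ext fun j => ?_
    simp only [LinearMap.comp_apply, h, map_smul, LinearEquiv.coe_coe, repr_self,
      Finsupp.lapply_apply, Finsupp.single_apply, hτ.eq_iff, LinearMap.smul_apply, coord_apply,
      smul_eq_mul]
    split_ifs with hji <;> simp [hji]
  simpa using LinearMap.congr_fun this x

namespace ClGA

variable {𝔽 : Type*} [RCLike 𝔽] {p q r : ℕ}

lemma Q_single (a : Fin (p + q + r)) : Q 𝔽 p q r (Pi.single a 1) = w 𝔽 p q r a := by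
  simp [Q, QuadraticMap.weightedSumSquares_apply, Pi.single_apply]

lemma isOrtho_single {a b : Fin (p + q + r)} (h : a ≠ b) :
    (Q 𝔽 p q r).IsOrtho (Pi.single a 1) (Pi.single b 1) := by
  rw [QuadraticMap.isOrtho_def]
  simp only [Q, QuadraticMap.weightedSumSquares_apply, ← Finset.sum_add_distrib]
  refine Finset.sum_congr rfl fun i _ => ?_
  rcases eq_or_ne i a with rfl | hia
  · simp [Pi.single_eq_of_ne h]
  · simp [Pi.single_eq_of_ne hia]

lemma w_ne_zero {a : Fin (p + q + r)} (h : (a : ℕ) < p + q) : w 𝔽 p q r a ≠ 0 := by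
  unfold w
  split_ifs <;> simp

lemma w_eq_zero {a : Fin (p + q + r)} (h : p + q ≤ (a : ℕ)) : w 𝔽 p q r a = 0 := by
  unfold w
  split_ifs <;> first | rfl | omega

lemma e_mul_self (a : Fin (p + q + r)) :
    e 𝔽 p q r a * e 𝔽 p q r a = algebraMap 𝔽 _ (w 𝔽 p q r a) := by
  rw [e, CliffordAlgebra.ι_sq_scalar, Q_single]

lemma e_mul_e_of_ne {a b : Fin (p + q + r)} (h : a ≠ b) :
    e 𝔽 p q r a * e 𝔽 p q r b = -(e 𝔽 p q r b * e 𝔽 p q r a) :=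
  eq_neg_of_add_eq_zero_left (CliffordAlgebra.ι_mul_ι_add_swap_of_isOrtho (isOrtho_single h))

lemma involute_e (a : Fin (p + q + r)) : CliffordAlgebra.involute (e 𝔽 p q r a) = -e 𝔽 p q r a :=
  CliffordAlgebra.involute_ι _

lemma e_mul_e_mem_Geven (a b : Fin (p + q + r)) : e 𝔽 p q r a * e 𝔽 p q r b ∈ Geven 𝔽 p q r := by
  show CliffordAlgebra.involute (e 𝔽 p q r a * e 𝔽 p q r b) = _
  rw [map_mul, involute_e, involute_e, neg_mul_neg]

lemma ι_eq_sum_smul_e (m : Fin (p + q + r) → 𝔽) :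
    CliffordAlgebra.ι (Q 𝔽 p q r) m = ∑ c, m c • e 𝔽 p q r c := by
  conv_lhs => rw [← (Pi.basisFun 𝔽 _).sum_repr m]
  simp [e]

lemma e_mul_prod_map_e (c : Fin (p + q + r)) (l : List (Fin (p + q + r))) :
    e 𝔽 p q r c * (l.map (e 𝔽 p q r)).prod
      = (-1 : 𝔽) ^ (l.length + l.count c) • ((l.map (e 𝔽 p q r)).prod * e 𝔽 p q r c) := by
  induction l with
  | nil => simp
  | cons b l ih =>
    simp only [List.map_cons, List.prod_cons, List.length_cons, List.count_cons, beq_iff_eq]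
    by_cases hb : b = c
    · subst hb
      rw [if_pos rfl, show l.length + 1 + (l.count b + 1) = l.length + l.count b + 2 by omega,
        pow_add, neg_one_sq, mul_one, mul_assoc, ← mul_smul_comm, ← ih]
    · rw [if_neg hb, add_zero, ← mul_assoc, e_mul_e_of_ne (Ne.symm hb), neg_mul, mul_assoc, ih,
        mul_smul_comm, ← mul_assoc,
        show l.length + 1 + l.count c = l.length + l.count c + 1 by omega, pow_succ, mul_neg_one,
        neg_smul]

lemma prod_map_e_of_perm {l l' : List (Fin (p + q + r))} (h : l.Perm l') (hl : l.Nodup) :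
    ∃ s : 𝔽, s ≠ 0 ∧ (l.map (e 𝔽 p q r)).prod = s • (l'.map (e 𝔽 p q r)).prod := by
  induction h with
  | nil => exact ⟨1, one_ne_zero, by simp⟩
  | cons x _ ih =>
    obtain ⟨s, hs, h⟩ := ih (List.nodup_cons.1 hl).2
    exact ⟨s, hs, by simp only [List.map_cons, List.prod_cons, h, mul_smul_comm]⟩
  | swap x y l =>
    have hxy : x ≠ y := fun h => by simp [h] at hl
    refine ⟨-1, by simp, ?_⟩
    simp only [List.map_cons, List.prod_cons, ← mul_assoc, e_mul_e_of_ne (Ne.symm hxy)]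
    simp
  | trans h₁ _ ih₁ ih₂ =>
    obtain ⟨s₁, hs₁, h₁'⟩ := ih₁ hl
    obtain ⟨s₂, hs₂, h₂'⟩ := ih₂ (h₁.nodup_iff.1 hl)
    exact ⟨s₁ * s₂, mul_ne_zero hs₁ hs₂, by rw [h₁', h₂', smul_smul]⟩

variable (𝔽 p q r) in
def blade (A : Finset (Fin (p + q + r))) : G 𝔽 p q r := (A.sort.map (e 𝔽 p q r)).prod

lemma e_mul_blade (c : Fin (p + q + r)) (A : Finset (Fin (p + q + r))) :
    e 𝔽 p q r c * blade 𝔽 p q r A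
      = (-1 : 𝔽) ^ (A.card + if c ∈ A then 1 else 0) • (blade 𝔽 p q r A * e 𝔽 p q r c) := by
  rw [blade, e_mul_prod_map_e, Finset.length_sort]
  congr 3
  split_ifs with hc
  · exact List.count_eq_one_of_mem (A.sort_nodup _) ((Finset.mem_sort _).2 hc)
  · exact List.count_eq_zero_of_not_mem (mt (Finset.mem_sort _).1 hc)

lemma blade_mul_e_of_notMem {c : Fin (p + q + r)} {A : Finset (Fin (p + q + r))} (hc : c ∉ A) :
    ∃ s : 𝔽, s ≠ 0 ∧ blade 𝔽 p q r A * e 𝔽 p q r c = s • blade 𝔽 p q r (insert c A) := by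
  have hnodup : (A.sort ++ [c]).Nodup :=
    List.nodup_append.2 ⟨A.sort_nodup _, List.nodup_singleton c,
      fun a ha b hb => by rintro rfl; simp_all [Finset.mem_sort]⟩
  have hperm : (A.sort ++ [c]).Perm (insert c A).sort :=
    (List.perm_ext_iff_of_nodup hnodup ((insert c A).sort_nodup _)).2 fun a => by
      simp [Finset.mem_sort, or_comm]
  simpa [blade] using prod_map_e_of_perm (𝔽 := 𝔽) hperm hnodup

lemma blade_mul_e (c : Fin (p + q + r)) (A : Finset (Fin (p + q + r))) :
    ∃ t : 𝔽, ((c ∈ A → w 𝔽 p q r c ≠ 0) → t ≠ 0) ∧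
      blade 𝔽 p q r A * e 𝔽 p q r c = t • blade 𝔽 p q r (symmDiff A {c}) := by
  by_cases hc : c ∈ A
  · have hA : symmDiff A {c} = A.erase c := by
      ext x; by_cases hx : x = c <;> simp [Finset.mem_symmDiff, hx, hc]
    obtain ⟨s, hs, h⟩ := blade_mul_e_of_notMem (𝔽 := 𝔽) (Finset.notMem_erase c A)
    rw [Finset.insert_erase hc] at h
    have hA' : blade 𝔽 p q r A = s⁻¹ • (blade 𝔽 p q r (A.erase c) * e 𝔽 p q r c) := by
      rw [h, inv_smul_smul₀ hs]
    refine ⟨s⁻¹ * w 𝔽 p q r c, fun hw => mul_ne_zero (inv_ne_zero hs) (hw hc), ?_⟩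
    rw [hA, hA', smul_mul_assoc, mul_assoc, e_mul_self, ← Algebra.commutes, ← Algebra.smul_def,
      smul_smul]
  · have hA : symmDiff A {c} = insert c A := by
      ext x; by_cases hx : x = c <;> simp [Finset.mem_symmDiff, hx, hc]
    obtain ⟨s, hs, h⟩ := blade_mul_e_of_notMem (𝔽 := 𝔽) hc
    exact ⟨s, fun _ => hs, by rw [hA, h]⟩

lemma blade_mul_e_mul_e (a d : Fin (p + q + r)) (A : Finset (Fin (p + q + r))) :
    ∃ t : 𝔽, ((a ∈ A → w 𝔽 p q r a ≠ 0) → (d ∈ symmDiff A {a} → w 𝔽 p q r d ≠ 0) → t ≠ 0) ∧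
      blade 𝔽 p q r A * (e 𝔽 p q r a * e 𝔽 p q r d)
        = t • blade 𝔽 p q r (symmDiff (symmDiff A {a}) {d}) := by
  obtain ⟨t₁, ht₁, h₁⟩ := blade_mul_e (𝔽 := 𝔽) a A
  obtain ⟨t₂, ht₂, h₂⟩ := blade_mul_e (𝔽 := 𝔽) d (symmDiff A {a})
  exact ⟨t₁ * t₂, fun ha hd => mul_ne_zero (ht₁ ha) (ht₂ hd),
    by rw [← mul_assoc, h₁, smul_mul_assoc, h₂, smul_smul]⟩

variable (𝔽 p q r) in
def bladeBasis : Module.Basis (Finset (Fin (p + q + r))) 𝔽 (G 𝔽 p q r) :=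
  (Pi.basisFun 𝔽 (Fin (p + q + r))).ExteriorAlgebra.map (CliffordAlgebra.equivExterior _).symm

lemma bladeBasis_apply (A : Finset (Fin (p + q + r))) :
    bladeBasis 𝔽 p q r A = blade 𝔽 p q r A := by
  have he : e 𝔽 p q r = CliffordAlgebra.ι (Q 𝔽 p q r) ∘ fun a => Pi.single a 1 := rfl
  rw [bladeBasis, Module.Basis.map_apply, LinearEquiv.symm_apply_eq, blade,
    ExteriorAlgebra.basis_apply_eq_prod_map_sort, he, ← List.map_map,
    CliffordAlgebra.equivExterior_prod_map_ι, List.map_map]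
  · simp only [Pi.basisFun_apply]
    rfl
  · exact A.sortedLT_sort.pairwise.map _ fun a b h => isOrtho_single h.ne

lemma bladeBasis_repr_eq_zero {X : G 𝔽 p q r} {a d : Fin (p + q + r)} (hwa : w 𝔽 p q r a ≠ 0)
    (hX : X * (e 𝔽 p q r a * e 𝔽 p q r d) = e 𝔽 p q r a * e 𝔽 p q r d * X)
    {A : Finset (Fin (p + q + r))} (ha : a ∈ A) (hd : d ∉ A) :
    (bladeBasis 𝔽 p q r).repr X A = 0 := by
  set τ : Finset (Fin (p + q + r)) → Finset (Fin (p + q + r)) :=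
    fun A' => symmDiff (symmDiff A' {a}) {d}
  have hτ : Function.Injective τ := (symmDiff_left_injective _).comp (symmDiff_left_injective _)
  choose t ht hmul using blade_mul_e_mul_e (𝔽 := 𝔽) a d
  set σ : Finset (Fin (p + q + r)) → 𝔽 := fun A' =>
    (-1) ^ (A'.card + if d ∈ A' then 1 else 0) * (-1) ^ (A'.card + if a ∈ A' then 1 else 0)
  have hleft : ∀ A', e 𝔽 p q r a * e 𝔽 p q r d * blade 𝔽 p q r A'
      = (σ A' * t A') • blade 𝔽 p q r (τ A') := by
    intro A'
    rw [mul_assoc, e_mul_blade, mul_smul_comm, ← mul_assoc, e_mul_blade, smul_mul_assoc,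
      smul_smul, mul_assoc, hmul, smul_smul]
  have hσ : σ A = -1 := by
    simp only [σ, if_pos ha, if_neg hd, ← pow_add]
    exact Odd.neg_one_pow ⟨A.card, by ring⟩
  have hR := (bladeBasis 𝔽 p q r).repr_apply_of_apply_eq_smul
    (LinearMap.mulRight 𝔽 (e 𝔽 p q r a * e 𝔽 p q r d)) hτ t (fun A' => by
      rw [LinearMap.mulRight_apply, bladeBasis_apply, bladeBasis_apply]; exact hmul A') X A
  have hL := (bladeBasis 𝔽 p q r).repr_apply_of_apply_eq_smul
    (LinearMap.mulLeft 𝔽 (e 𝔽 p q r a * e 𝔽 p q r d)) hτ (fun A' => σ A' * t A') (fun A' => by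
      rw [LinearMap.mulLeft_apply, bladeBasis_apply, bladeBasis_apply]; exact hleft A') X A
  simp only [LinearMap.mulRight_apply, LinearMap.mulLeft_apply, hσ, hX] at hR hL
  have h2 : (2 * t A) * (bladeBasis 𝔽 p q r).repr X A = 0 := by
    linear_combination hR.symm.trans hL
  have hd' : d ∉ symmDiff A {a} := by
    simp [Finset.mem_symmDiff, hd, (ne_of_mem_of_not_mem ha hd).symm]
  exact (mul_eq_zero.1 h2).resolve_left
    (mul_ne_zero two_ne_zero (ht A (fun _ => hwa) fun h => absurd h hd'))

lemma null_or_eq_univ_of_bladeBasis_repr_ne_zero {X : G 𝔽 p q r}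
    (hX : ∀ V ∈ Geven 𝔽 p q r, X * V = V * X) {A : Finset (Fin (p + q + r))}
    (hA : (bladeBasis 𝔽 p q r).repr X A ≠ 0) :
    (∀ c ∈ A, p + q ≤ (c : ℕ)) ∨ A = Finset.univ := by
  by_contra! h
  obtain ⟨⟨a, ha, hap⟩, hA'⟩ := h
  obtain ⟨d, hd⟩ : ∃ d, d ∉ A := by
    by_contra! hall
    exact hA' (Finset.eq_univ_iff_forall.2 hall)
  exact hA (bladeBasis_repr_eq_zero (w_ne_zero hap) (hX _ (e_mul_e_mem_Geven a d)) ha hd)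

lemma blade_mem_Λr {A : Finset (Fin (p + q + r))} (hA : ∀ c ∈ A, p + q ≤ (c : ℕ)) :
    blade 𝔽 p q r A ∈ Λr 𝔽 p q r :=
  Subalgebra.list_prod_mem _ fun x hx => by
    obtain ⟨c, hc, rfl⟩ := List.mem_map.1 hx
    exact Algebra.subset_adjoin ⟨c, hA c ((Finset.mem_sort _).1 hc), rfl⟩

lemma blade_univ : blade 𝔽 p q r Finset.univ = eTop 𝔽 p q r := by
  rw [blade, Fin.sort_univ, eTop, List.ofFn_eq_map]

lemma mul_eq_mul_map_of_forall_e (f : G 𝔽 p q r →ₐ[𝔽] G 𝔽 p q r) {y : G 𝔽 p q r}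
    (h : ∀ c, e 𝔽 p q r c * y = y * f (e 𝔽 p q r c)) (x : G 𝔽 p q r) : x * y = y * f x := by
  induction x using CliffordAlgebra.induction with
  | algebraMap t => rw [AlgHom.commutes]; exact Algebra.commutes t y
  | ι m =>
    simp only [ι_eq_sum_smul_e, Finset.sum_mul, map_sum, Finset.mul_sum, smul_mul_assoc, h,
      map_smul, mul_smul_comm]
  | mul x₁ x₂ h₁ h₂ => rw [mul_assoc, h₂, ← mul_assoc, h₁, mul_assoc, map_mul]
  | add x₁ x₂ h₁ h₂ => rw [add_mul, h₁, h₂, map_add, mul_add]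

lemma mem_centralizer_Geven_of_forall_e (f : G 𝔽 p q r →ₐ[𝔽] G 𝔽 p q r)
    (hf : ∀ V ∈ Geven 𝔽 p q r, f V = V) {y : G 𝔽 p q r}
    (h : ∀ c, e 𝔽 p q r c * y = y * f (e 𝔽 p q r c)) :
    y ∈ Subalgebra.centralizer 𝔽 (Geven 𝔽 p q r : Set (G 𝔽 p q r)) :=
  (Subalgebra.mem_centralizer_iff 𝔽).2 fun V hV => by rw [mul_eq_mul_map_of_forall_e f h, hf V hV]

lemma Λr_le_centralizer_Geven :
    Λr 𝔽 p q r ≤ Subalgebra.centralizer 𝔽 (Geven 𝔽 p q r : Set (G 𝔽 p q r)) := by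
  refine Algebra.adjoin_le ?_
  rintro _ ⟨c, hc, rfl⟩
  refine mem_centralizer_Geven_of_forall_e CliffordAlgebra.involute (fun V hV => hV) fun b => ?_
  rw [involute_e, mul_neg]
  by_cases hb : b = c
  · rw [hb, e_mul_self, w_eq_zero hc, map_zero, neg_zero]
  · exact e_mul_e_of_ne hb

lemma eTop_mem_centralizer_Geven :
    eTop 𝔽 p q r ∈ Subalgebra.centralizer 𝔽 (Geven 𝔽 p q r : Set (G 𝔽 p q r)) := by
  have h : ∀ c, e 𝔽 p q r c * eTop 𝔽 p q r
      = (-1 : 𝔽) ^ (p + q + r + 1) • (eTop 𝔽 p q r * e 𝔽 p q r c) := fun c => by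
    rw [← blade_univ, e_mul_blade, Finset.card_univ, Fintype.card_fin, if_pos (Finset.mem_univ c)]
  rcases neg_one_pow_eq_or 𝔽 (p + q + r + 1) with hs | hs
  · exact mem_centralizer_Geven_of_forall_e (AlgHom.id 𝔽 _) (fun _ _ => rfl) fun c => by
      rw [h, hs, one_smul, AlgHom.id_apply]
  · refine mem_centralizer_Geven_of_forall_e CliffordAlgebra.involute (fun V hV => hV) fun c => ?_
    rw [h, hs, involute_e, mul_neg, neg_one_smul]

variable (𝔽 p q r) in
theorem stmt2 :
    {X : G 𝔽 p q r | ∀ V ∈ Geven 𝔽 p q r, X * V = V * X}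
      = ↑(Λrs 𝔽 p q r ⊔ Gn 𝔽 p q r) := by
  ext X
  refine ⟨fun hX => ?_, fun hX V hV => ?_⟩
  · rw [SetLike.mem_coe, ← (bladeBasis 𝔽 p q r).sum_repr X]
    refine Submodule.sum_mem _ fun A _ => ?_
    by_cases hA : (bladeBasis 𝔽 p q r).repr X A = 0
    · rw [hA, zero_smul]
      exact zero_mem _
    rw [bladeBasis_apply]
    rcases null_or_eq_univ_of_bladeBasis_repr_ne_zero hX hA with hnull | rfl
    · exact Submodule.mem_sup_left (Submodule.smul_mem _ _ (blade_mem_Λr hnull))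
    · rw [blade_univ]
      exact Submodule.mem_sup_right (Submodule.smul_mem _ _ (Submodule.mem_span_singleton_self _))
  · have hle : Λrs 𝔽 p q r ⊔ Gn 𝔽 p q r ≤ Subalgebra.toSubmodule
        (Subalgebra.centralizer 𝔽 (Geven 𝔽 p q r : Set (G 𝔽 p q r))) :=
      sup_le (Subalgebra.toSubmodule.monotone Λr_le_centralizer_Geven)
        (Submodule.span_le.2 (Set.singleton_subset_iff.2 eTop_mem_centralizer_Geven))
    exact ((Subalgebra.mem_centralizer_iff 𝔽).1 (hle hX) V hV).symm

end ClGA
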